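/- arXiv:2103.08938 — 5 statements merged into one kernel-verified Lean document; each statement's English description precedes it below -/
import Mathlib

section
/- Let (X, B, μ) be a probability space with an increasing sequence of σ-algebras B₁ ⊆ B₂ ⊆ ... ⊆ B, let k ∈ ℕ, and let (fₙ) be a uniformly bounded sequence of functions with fₙ measurable with respect to B_{n+k}. Then almost surely, (1/N) ∑_{n=1}^N (fₙ − E(fₙ | Bₙ)) → 0 as N → ∞. -/
/-!
Put `gₙ = fₙ - E(fₙ | ℬₙ)`. Since `E(gₙ | ℬₙ) = 0` and `gₙ` is `ℬₙ₊ₖ`-measurable, pulling `gₙ` out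
of `E(gₙ gₘ | ℬₘ)` gives `E(gₙ gₘ) = 0` as soon as `m ≥ n + k`: the Gram matrix of the bounded
sequence `(gₙ)` is supported on a band of width `2k`, so `E(S_N²) = O(N)` for the partial sums
`S_N = g₁ + ⋯ + g_N`. Along the squares, `∑ⱼ E((S_{j²}/j²)²) = O(∑ⱼ 1/j²) < ∞`, hence
`S_{j²}/j² → 0` almost surely, and the boundedness of `(gₙ)` fills the gaps between squares.
-/

open MeasureTheory Filter Finset Topology

theorem Nat.tendsto_sqrt_atTop : Tendsto Nat.sqrt atTop atTop :=
  Monotone.tendsto_atTop_atTop (fun _ _ => Nat.sqrt_le_sqrt) fun b => ⟨b ^ 2, (Nat.sqrt_eq' b).ge⟩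

theorem abs_sum_Icc_sub_sum_Icc_le {u : ℕ → ℝ} {K : ℝ} (hu : ∀ n, |u n| ≤ K) {M N : ℕ}
    (hMN : M ≤ N) : |∑ n ∈ Icc 1 N, u n - ∑ n ∈ Icc 1 M, u n| ≤ (N - M : ℕ) * K := by
  have hIoc (L : ℕ) : Icc 1 L = Ioc 0 L := Icc_add_one_left_eq_Ioc 0 L
  rw [hIoc, hIoc, ← sum_Ioc_consecutive _ M.zero_le hMN, add_sub_cancel_left, ← Nat.card_Ioc,
    ← nsmul_eq_mul]
  exact (abs_sum_le_sum_abs _ _).trans (sum_le_card_nsmul _ _ _ fun n _ => hu n)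

theorem tendsto_avg_of_tendsto_avg_sq {u : ℕ → ℝ} {K : ℝ} (hu : ∀ n, |u n| ≤ K)
    (h : Tendsto (fun j : ℕ => ((j ^ 2 : ℕ) : ℝ)⁻¹ * ∑ n ∈ Icc 1 (j ^ 2), u n) atTop (𝓝 0)) :
    Tendsto (fun N : ℕ => (N : ℝ)⁻¹ * ∑ n ∈ Icc 1 N, u n) atTop (𝓝 0) := by
  have hK : 0 ≤ K := (abs_nonneg _).trans (hu 0)
  have hbound : Tendsto (fun N : ℕ => ((N.sqrt : ℝ) ^ 2)⁻¹ * |∑ n ∈ Icc 1 (N.sqrt ^ 2), u n|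
      + 2 * K * (N.sqrt : ℝ)⁻¹) atTop (𝓝 0) := by
    simpa [abs_mul] using (h.abs.comp Nat.tendsto_sqrt_atTop).add
      ((tendsto_inv_atTop_nhds_zero_nat.comp Nat.tendsto_sqrt_atTop).const_mul (2 * K))
  refine squeeze_zero_norm' ?_ hbound
  filter_upwards [eventually_ge_atTop 1] with N hN
  set j := N.sqrt
  have hj : (1 : ℝ) ≤ j := by exact_mod_cast Nat.sqrt_pos.2 hN
  have hjN : j ^ 2 ≤ N := Nat.sqrt_le' N
  have hgap : ((N - j ^ 2 : ℕ) : ℝ) ≤ 2 * j := by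
    have hN : N < (j + 1) ^ 2 := Nat.lt_succ_sqrt' N
    have hsq : (j + 1) ^ 2 = j ^ 2 + 2 * j + 1 := by ring
    exact_mod_cast (by omega : N - j ^ 2 ≤ 2 * j)
  have hS := abs_sum_Icc_sub_sum_Icc_le hu hjN
  rw [norm_mul, norm_inv, Real.norm_natCast, Real.norm_eq_abs]
  calc (N : ℝ)⁻¹ * |∑ n ∈ Icc 1 N, u n|
      ≤ (N : ℝ)⁻¹ * (|∑ n ∈ Icc 1 (j ^ 2), u n| + 2 * j * K) := by
        gcongr
        linarith [abs_sub_abs_le_abs_sub (∑ n ∈ Icc 1 N, u n) (∑ n ∈ Icc 1 (j ^ 2), u n),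
          mul_le_mul_of_nonneg_right hgap hK]
    _ ≤ ((j : ℝ) ^ 2)⁻¹ * (|∑ n ∈ Icc 1 (j ^ 2), u n| + 2 * j * K) := by
        gcongr
        exact_mod_cast hjN
    _ = ((j : ℝ) ^ 2)⁻¹ * |∑ n ∈ Icc 1 (j ^ 2), u n| + 2 * K * (j : ℝ)⁻¹ := by
        field_simp

theorem Finset.sum_sum_le_of_banded {e : ℕ → ℕ → ℝ} {B : ℝ} {k : ℕ} (hB : ∀ n m, |e n m| ≤ B)
    (hband : ∀ n m, n + k ≤ m ∨ m + k ≤ n → e n m = 0) (s : Finset ℕ) :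
    ∑ n ∈ s, ∑ m ∈ s, e n m ≤ #s * (2 * k * B) := by
  have hB0 : 0 ≤ B := (abs_nonneg _).trans (hB 0 0)
  have hrow (n : ℕ) : ∑ m ∈ s, e n m ≤ 2 * k * B := by
    have hsupp : ∑ m ∈ s ∩ Ico (n + 1 - k) (n + k), e n m = ∑ m ∈ s, e n m :=
      sum_subset inter_subset_left fun m _ hm =>
        hband n m (by simp_all only [mem_inter, mem_Ico, true_and]; omega)
    have hcard : (#(s ∩ Ico (n + 1 - k) (n + k)) : ℝ) ≤ 2 * k := by
      exact_mod_cast (card_le_card inter_subset_right).trans (by simp only [Nat.card_Ico]; omega)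
    calc ∑ m ∈ s, e n m = ∑ m ∈ s ∩ Ico (n + 1 - k) (n + k), e n m := hsupp.symm
      _ ≤ #(s ∩ Ico (n + 1 - k) (n + k)) * B := by
        simpa only [nsmul_eq_mul] using
          sum_le_card_nsmul _ _ _ fun m _ => (le_abs_self _).trans (hB n m)
      _ ≤ 2 * k * B := by gcongr
  simpa only [sum_const, nsmul_eq_mul] using sum_le_sum fun n (_ : n ∈ s) => hrow n

section

variable {X : Type*} {m₀ : MeasurableSpace X} {μ : Measure X}

theorem integral_mul_eq_zero_of_condExp_eq_zero {m : MeasurableSpace X} (hm : m ≤ m₀)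
    [SigmaFinite (μ.trim hm)] {a b : X → ℝ} (ha : StronglyMeasurable[m] a)
    (hab : Integrable (a * b) μ) (hb : Integrable b μ) (hb0 : μ[b | m] =ᵐ[μ] 0) :
    ∫ x, a x * b x ∂μ = 0 := by
  calc ∫ x, a x * b x ∂μ = ∫ x, μ[a * b | m] x ∂μ := (integral_condExp hm).symm
    _ = ∫ x, (a * μ[b | m]) x ∂μ :=
      integral_congr_ae (condExp_mul_of_stronglyMeasurable_left ha hab hb)
    _ = 0 := integral_eq_zero_of_ae (by filter_upwards [hb0] with x hx; simp [hx])

theorem condExp_sub_condExp_ae_eq_zero {m : MeasurableSpace X} (hm : m ≤ m₀)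
    [SigmaFinite (μ.trim hm)] {f : X → ℝ} (hf : Integrable f μ) :
    μ[f - μ[f | m] | m] =ᵐ[μ] 0 := by
  filter_upwards [condExp_sub hf (integrable_condExp (m := m) (f := f)) m,
    condExp_condExp_of_le (f := f) le_rfl hm] with x h₁ h₂
  simp [h₁, h₂]

theorem integral_sq_sum_le_of_banded [IsFiniteMeasure μ] {g : ℕ → X → ℝ} {K : ℝ} {k : ℕ}
    (hg : ∀ n, AEStronglyMeasurable (g n) μ) (hK : ∀ n, ∀ᵐ x ∂μ, |g n x| ≤ K)
    (horth : ∀ n m, n + k ≤ m → ∫ x, g n x * g m x ∂μ = 0) (s : Finset ℕ) :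
    ∫ x, (∑ n ∈ s, g n x) ^ 2 ∂μ ≤ #s * (2 * k * (K ^ 2 * μ.real Set.univ)) := by
  have hprod (n m : ℕ) : ∀ᵐ x ∂μ, ‖g n x * g m x‖ ≤ K ^ 2 := by
    filter_upwards [hK n, hK m] with x hn hm
    rw [norm_mul, Real.norm_eq_abs, Real.norm_eq_abs, sq]
    exact mul_le_mul hn hm (abs_nonneg _) ((abs_nonneg _).trans hn)
  have hint (n m : ℕ) : Integrable (fun x => g n x * g m x) μ :=
    .of_bound ((hg n).mul (hg m)) _ (hprod n m)
  have hexpand (x : X) : (∑ n ∈ s, g n x) ^ 2 = ∑ n ∈ s, ∑ m ∈ s, g n x * g m x := by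
    rw [sq, sum_mul_sum]
  simp_rw [hexpand]
  rw [integral_finsetSum _ fun n _ => integrable_finsetSum _ fun m _ => hint n m]
  simp_rw [integral_finsetSum _ fun m _ => hint _ m]
  refine sum_sum_le_of_banded (fun n m => norm_integral_le_of_norm_le_const (hprod n m)) ?_ s
  rintro n m (h | h)
  · exact horth n m h
  · simp_rw [mul_comm (g n _)]
    exact horth m n h

theorem ae_tendsto_zero_of_summable_integral_sq {Y : ℕ → X → ℝ}
    (hint : ∀ j, Integrable (fun x => Y j x ^ 2) μ)
    (hsum : Summable fun j => ∫ x, Y j x ^ 2 ∂μ) :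
    ∀ᵐ x ∂μ, Tendsto (fun j => Y j x) atTop (𝓝 0) := by
  have hmeas (j : ℕ) : AEMeasurable (fun x => ENNReal.ofReal (Y j x ^ 2)) μ :=
    (hint j).aemeasurable.ennreal_ofReal
  have hfin : ∫⁻ x, ∑' j, ENNReal.ofReal (Y j x ^ 2) ∂μ ≠ ⊤ := by
    rw [lintegral_tsum hmeas]
    simp_rw [← ofReal_integral_eq_lintegral_ofReal (hint _) (ae_of_all _ fun _ => sq_nonneg _)]
    rw [← ENNReal.ofReal_tsum_of_nonneg (fun j => integral_nonneg fun _ => sq_nonneg _) hsum]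
    exact ENNReal.ofReal_ne_top
  filter_upwards [ae_lt_top' (AEMeasurable.tsum hmeas) hfin] with x hx
  have hsq : Tendsto (fun j => Y j x ^ 2) atTop (𝓝 0) := by
    simpa [Function.comp_def, ENNReal.toReal_ofReal (sq_nonneg _)] using
      (ENNReal.tendsto_toReal ENNReal.zero_ne_top).comp
        (ENNReal.tendsto_atTop_zero_of_tsum_ne_top hx.ne)
  exact (tendsto_zero_iff_abs_tendsto_zero _).2
    (by simpa [Function.comp_def, Real.sqrt_sq_eq_abs] using hsq.sqrt)

theorem ae_tendsto_avg_zero_of_condExp_eq_zero [IsFiniteMeasure μ] (ℱ : Filtration ℕ m₀)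
    {k : ℕ} {g : ℕ → X → ℝ} {K : ℝ} (hg : ∀ n, StronglyMeasurable[ℱ (n + k)] (g n))
    (hK : ∀ n, ∀ᵐ x ∂μ, |g n x| ≤ K) (hg0 : ∀ n, μ[g n | ℱ n] =ᵐ[μ] 0) :
    ∀ᵐ x ∂μ, Tendsto (fun N : ℕ => (N : ℝ)⁻¹ * ∑ n ∈ Icc 1 N, g n x) atTop (𝓝 0) := by
  have hgm (n : ℕ) : AEStronglyMeasurable (g n) μ :=
    ((hg n).mono (ℱ.le _)).aestronglyMeasurable
  have hK' (n : ℕ) : ∀ᵐ x ∂μ, ‖g n x‖ ≤ K := by simpa only [Real.norm_eq_abs] using hK n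
  have hint (n : ℕ) : Integrable (g n) μ := .of_bound (hgm n) K (hK' n)
  have horth (n m : ℕ) (h : n + k ≤ m) : ∫ x, g n x * g m x ∂μ = 0 :=
    integral_mul_eq_zero_of_condExp_eq_zero (ℱ.le m) ((hg n).mono (ℱ.mono h))
      ((hint m).bdd_mul (hgm n) (hK' n)) (hint m) (hg0 m)
  set D := 2 * k * (K ^ 2 * μ.real Set.univ)
  set Y : ℕ → X → ℝ := fun j x => ((j ^ 2 : ℕ) : ℝ)⁻¹ * ∑ n ∈ Icc 1 (j ^ 2), g n x
  have hYint (j : ℕ) : Integrable (fun x => Y j x ^ 2) μ := by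
    have hS : MemLp (fun x => ∑ n ∈ Icc 1 (j ^ 2), g n x) ⊤ μ :=
      memLp_finsetSum _ fun n _ => memLp_top_of_bound (hgm n) K (hK' n)
    exact ((hS.const_mul _).mono_exponent le_top).integrable_sq
  have hYbound (j : ℕ) : ∫ x, Y j x ^ 2 ∂μ ≤ D * (1 / (j : ℝ) ^ 2) := by
    have h := integral_sq_sum_le_of_banded hgm hK horth (Icc 1 (j ^ 2))
    simp only [Nat.card_Icc, add_tsub_cancel_right] at h
    simp only [Y, mul_pow, integral_const_mul]
    calc (((j ^ 2 : ℕ) : ℝ)⁻¹) ^ 2 * ∫ x, (∑ n ∈ Icc 1 (j ^ 2), g n x) ^ 2 ∂μ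
        ≤ (((j ^ 2 : ℕ) : ℝ)⁻¹) ^ 2 * ((j ^ 2 : ℕ) * D) := by gcongr
      _ = D * (1 / (j : ℝ) ^ 2) := by
        rcases eq_or_ne j 0 with rfl | hj
        · simp
        · push_cast
          field_simp
  have hsum : Summable fun j => ∫ x, Y j x ^ 2 ∂μ :=
    .of_nonneg_of_le (fun j => integral_nonneg fun _ => sq_nonneg _) hYbound
      ((Real.summable_one_div_nat_pow.2 one_lt_two).mul_left D)
  filter_upwards [ae_tendsto_zero_of_summable_integral_sq hYint hsum, ae_all_iff.2 hK]
    with x hx hxK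
  exact tendsto_avg_of_tendsto_avg_sq hxK hx

end

/-- **Ergodic theorem for martingale differences with lag `k`.**
If `ℬ₁ ⊆ ℬ₂ ⊆ ⋯` is an increasing sequence of sub-σ-algebras, `k ∈ ℕ`, and `(fₙ)` is a
uniformly bounded sequence with `fₙ` measurable w.r.t. `ℬ (n+k)`, then almost surely
`(1/N) ∑_{n=1}^N (fₙ - E(fₙ | ℬₙ)) → 0`. -/
theorem martingale_difference_ergodic_theorem
    {X : Type*} {m : MeasurableSpace X} (μ : Measure X) [IsProbabilityMeasure μ]
    (ℬ : ℕ → MeasurableSpace X) (hmono : Monotone ℬ) (hle : ∀ n, ℬ n ≤ m)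
    (k : ℕ) (f : ℕ → X → ℝ) (C : ℝ) (hbdd : ∀ n x, |f n x| ≤ C)
    (hmeas : ∀ n, Measurable[ℬ (n + k)] (f n)) :
    ∀ᵐ x ∂μ, Tendsto
      (fun N : ℕ => (N : ℝ)⁻¹ * ∑ n ∈ Finset.Icc 1 N, (f n x - (μ[f n | ℬ n]) x))
      atTop (nhds 0) := by
  let ℱ : Filtration ℕ m := ⟨ℬ, hmono, hle⟩
  have hint (n : ℕ) : Integrable (f n) μ :=
    .of_bound ((hmeas n).mono (hle _) le_rfl).aestronglyMeasurable C
      (ae_of_all _ fun x => (Real.norm_eq_abs _).trans_le (hbdd n x))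
  refine ae_tendsto_avg_zero_of_condExp_eq_zero ℱ (k := k) (g := fun n => f n - μ[f n | ℬ n])
    (K := 2 * C) (fun n => ?_) (fun n => ?_)
    fun n => condExp_sub_condExp_ae_eq_zero (hle n) (hint n)
  · exact (hmeas n).stronglyMeasurable.sub
      (stronglyMeasurable_condExp.mono (hmono (Nat.le_add_right n k)))
  · filter_upwards [ae_bdd_abs_condExp_of_ae_bdd_abs (m := ℬ n) (ae_of_all μ (hbdd n))] with x hx
    exact (abs_sub _ _).trans (by linarith [hbdd n x])
end

section
/- Let ν be a Borel probability measure on ℝ, b > 1, r > 0, and m ≠ 0 a real number. Then ∫_0^1 |∫ e^{2πi m b^t y} dν(y)|² dt ≤ 1/(r·|m|·ln b) + ∫ ν(B_r(y)) dν(y). -/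
/-!
Expanding the square, `∫₀¹ |ν̂(m bᵗ)|² dt = ∫∫ K(x - y) dν(x) dν(y)` with
`K(u) = ∫₀¹ e^{2πi m u bᵗ} dt`. Always `|K| ≤ 1`, and for `|u| > r` the phase `t ↦ 2π m u bᵗ`
has monotone derivative of size at least `2π |m| r log b`, so van der Corput's first derivative
test gives `|K(u)| ≤ 1 / (r |m| log b)`. The pairs with `|x - y| ≤ r` have `ν ⊗ ν`-mass
`∫ ν(B_r(y)) dν(y)`.
-/

open MeasureTheory Complex Set
open scoped ComplexConjugate

/-- Integration by parts against `e^{iφ} = (e^{iφ})' · (-i ρ)`, where `ρ = 1 / φ'`. -/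
theorem integral_exp_mul_I_eq_by_parts {a b : ℝ} {φ φ' ρ ρ' : ℝ → ℝ}
    (hφ : ∀ t ∈ uIcc a b, HasDerivAt φ (φ' t) t) (hφ'_cont : ContinuousOn φ' (uIcc a b))
    (hρ : ∀ t ∈ uIcc a b, HasDerivAt ρ (ρ' t) t) (hρ'_cont : ContinuousOn ρ' (uIcc a b))
    (hρφ' : ∀ t ∈ uIcc a b, ρ t * φ' t = 1) :
    ∫ t in a..b, exp (φ t * I) =
      (ρ b : ℂ) * -I * exp (φ b * I) - (ρ a : ℂ) * -I * exp (φ a * I) -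
        ∫ t in a..b, (ρ' t : ℂ) * -I * exp (φ t * I) := by
  have hparts := intervalIntegral.integral_mul_deriv_eq_deriv_mul
    (u := fun t => (ρ t : ℂ) * -I) (v := fun t => exp (φ t * I))
    (u' := fun t => (ρ' t : ℂ) * -I) (v' := fun t => exp (φ t * I) * (φ' t * I))
    (fun t ht => (hρ t ht).ofReal_comp.mul_const _)
    (fun t ht => ((hφ t ht).ofReal_comp.mul_const I).cexp)
    ((continuous_ofReal.comp_continuousOn hρ'_cont).mul continuousOn_const).intervalIntegrable
    ((continuous_exp.comp_continuousOn ((continuous_ofReal.comp_continuousOn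
      (HasDerivAt.continuousOn hφ)).mul continuousOn_const)).mul
      ((continuous_ofReal.comp_continuousOn hφ'_cont).mul continuousOn_const)).intervalIntegrable
  rw [← hparts]
  refine intervalIntegral.integral_congr fun t ht => ?_
  have hρφ'_complex : (ρ t : ℂ) * φ' t = 1 := by exact_mod_cast hρφ' t ht
  calc exp (φ t * I) = (ρ t * φ' t : ℂ) * -(I * I) * exp (φ t * I) := by
        rw [hρφ'_complex, I_mul_I]
        ring
    _ = _ := by ring

/-- Van der Corput's first derivative test. -/
theorem norm_integral_exp_mul_I_le_of_monotone_deriv {a b : ℝ} (hab : a ≤ b)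
    {φ φ' φ'' : ℝ → ℝ} (hφ : ∀ t ∈ Icc a b, HasDerivAt φ (φ' t) t)
    (hφ' : ∀ t ∈ Icc a b, HasDerivAt φ' (φ'' t) t) (hφ''_cont : ContinuousOn φ'' (Icc a b))
    (hφ'_pos : ∀ t ∈ Icc a b, 0 < φ' t) (hφ''_nonneg : ∀ t ∈ Icc a b, 0 ≤ φ'' t) :
    ‖∫ t in a..b, exp (φ t * I)‖ ≤ 2 / φ' a := by
  rw [← uIcc_of_le hab] at hφ hφ' hφ''_cont hφ'_pos hφ''_nonneg
  have hφ'_cont : ContinuousOn φ' (uIcc a b) := HasDerivAt.continuousOn hφ'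
  have hinv : ∀ t ∈ uIcc a b, HasDerivAt (fun s => (φ' s)⁻¹) (-(φ'' t / φ' t ^ 2)) t :=
    fun t ht => by simpa [div_eq_mul_inv] using (hφ' t ht).fun_inv (hφ'_pos t ht).ne'
  have hinv'_cont : ContinuousOn (fun t => -(φ'' t / φ' t ^ 2)) (uIcc a b) :=
    (hφ''_cont.div (hφ'_cont.pow 2) fun t ht => (pow_pos (hφ'_pos t ht) 2).ne').neg
  -- `1 / φ'` decreases, so the remainder is bounded by its total variation `1/φ' a - 1/φ' b`
  have hrem : ‖∫ t in a..b, ((-(φ'' t / φ' t ^ 2) : ℝ) : ℂ) * -I * exp (φ t * I)‖ ≤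
      (φ' a)⁻¹ - (φ' b)⁻¹ := by
    refine (intervalIntegral.norm_integral_le_integral_norm hab).trans_eq ?_
    rw [← neg_sub, ← intervalIntegral.integral_eq_sub_of_hasDerivAt hinv
      hinv'_cont.intervalIntegrable, ← intervalIntegral.integral_neg]
    refine intervalIntegral.integral_congr fun t ht => ?_
    simp [norm_exp_ofReal_mul_I, abs_of_nonneg (hφ''_nonneg t ht)]
  have hbdry : ∀ t ∈ uIcc a b, ‖((φ' t)⁻¹ : ℝ) * -I * exp (φ t * I)‖ = (φ' t)⁻¹ := fun t ht => by
    simp [norm_exp_ofReal_mul_I, (hφ'_pos t ht).le]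
  rw [integral_exp_mul_I_eq_by_parts hφ hφ'_cont hinv hinv'_cont
    fun t ht => inv_mul_cancel₀ (hφ'_pos t ht).ne']
  calc _ ≤ ‖((φ' b)⁻¹ : ℝ) * -I * exp (φ b * I)‖ + ‖((φ' a)⁻¹ : ℝ) * -I * exp (φ a * I)‖
        + ‖∫ t in a..b, ((-(φ'' t / φ' t ^ 2) : ℝ) : ℂ) * -I * exp (φ t * I)‖ :=
        (norm_sub_le _ _).trans (add_le_add_left (norm_sub_le _ _) _)
    _ ≤ (φ' b)⁻¹ + (φ' a)⁻¹ + ((φ' a)⁻¹ - (φ' b)⁻¹) := by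
      rw [hbdry b right_mem_uIcc, hbdry a left_mem_uIcc]
      gcongr
    _ = 2 / φ' a := by ring

theorem norm_integral_exp_mul_rpow_mul_I_le {b c : ℝ} (hb : 1 < b) (hc : c ≠ 0) :
    ‖∫ t in (0:ℝ)..1, exp (↑(c * b ^ t) * I)‖ ≤ 2 / (|c| * Real.log b) := by
  wlog hc_pos : 0 < c generalizing c
  · have hconj : ∀ t : ℝ, exp (↑(c * b ^ t) * I) = conj (exp (↑(-c * b ^ t) * I)) := fun t => by
      rw [← exp_conj, map_mul, conj_ofReal, conj_I]
      push_cast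
      ring_nf
    simp_rw [hconj, intervalIntegral.intervalIntegral_conj, RCLike.norm_conj, ← abs_neg c]
    exact this (neg_ne_zero.mpr hc) (neg_pos.mpr (lt_of_le_of_ne (not_lt.mp hc_pos) hc))
  have hderiv : ∀ k t : ℝ, HasDerivAt (fun s => k * b ^ s) (k * b ^ t * Real.log b) t :=
    fun k t => by
      simpa [mul_assoc] using
        (Real.hasStrictDerivAt_const_rpow (zero_lt_one.trans hb) t).hasDerivAt.const_mul k
  have hlog : 0 < Real.log b := Real.log_pos hb
  have := norm_integral_exp_mul_I_le_of_monotone_deriv zero_le_one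
    (fun t _ => hderiv c t) (φ'' := fun t => c * Real.log b ^ 2 * b ^ t)
    (fun t _ => by convert hderiv (c * Real.log b) t using 1 <;> [ext; skip] <;> ring)
    (HasDerivAt.continuousOn fun t _ => hderiv _ t) (fun t _ => by positivity)
    (fun t _ => by positivity)
  simpa [abs_of_pos hc_pos] using this

theorem norm_integral_exp_two_pi_mul_rpow_le {b r m u : ℝ} (hb : 1 < b) (hr : 0 < r) (hm : m ≠ 0)
    (hu : r ≤ |u|) :
    ‖∫ t in (0:ℝ)..1, exp (↑(2 * Real.pi * m * u * b ^ t) * I)‖ ≤ 1 / (r * |m| * Real.log b) := by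
  have hu₀ : u ≠ 0 := abs_pos.mp (hr.trans_le hu)
  have hlog : 0 < Real.log b := Real.log_pos hb
  have hπu : r ≤ Real.pi * |u| :=
    hu.trans (le_mul_of_one_le_left (abs_nonneg u) (by linarith [Real.pi_gt_three]))
  calc _ ≤ 2 / (|2 * Real.pi * m * u| * Real.log b) :=
        norm_integral_exp_mul_rpow_mul_I_le hb (by positivity)
    _ = 1 / (Real.pi * |u| * |m| * Real.log b) := by
        rw [abs_mul, abs_mul, abs_mul, abs_two, abs_of_pos Real.pi_pos]
        field_simp
    _ ≤ 1 / (r * |m| * Real.log b) := by gcongr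

theorem norm_integral_sq_eq_re_integral_prod {α : Type*} [MeasurableSpace α] (ν : Measure α)
    [SFinite ν] (f : α → ℂ) :
    ‖∫ y, f y ∂ν‖ ^ 2 = (∫ p, f p.1 * conj (f p.2) ∂ν.prod ν).re := by
  rw [integral_prod_mul f (fun y => conj (f y)), integral_conj, mul_conj, ofReal_re,
    normSq_eq_norm_sq]

theorem integral_norm_integral_sq_le {T α : Type*} [MeasurableSpace T] [MeasurableSpace α]
    (τ : Measure T) (ν : Measure α) [IsFiniteMeasure τ] [IsFiniteMeasure ν] {f : T → α → ℂ}
    (hf : StronglyMeasurable (Function.uncurry f)) {C : ℝ} (hC : ∀ t y, ‖f t y‖ ≤ C) :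
    ∫ t, ‖∫ y, f t y ∂ν‖ ^ 2 ∂τ ≤ ∫ p, ‖∫ t, f t p.1 * conj (f t p.2) ∂τ‖ ∂ν.prod ν := by
  set F : T → α × α → ℂ := fun t p => f t p.1 * conj (f t p.2)
  have hF : Integrable (Function.uncurry F) (τ.prod (ν.prod ν)) := by
    refine Integrable.mono' (integrable_const (C * C)) ?_ (ae_of_all _ fun q => ?_)
    · have h₁ := hf.comp_measurable (g := fun q : T × α × α => (q.1, q.2.1)) (by fun_prop)
      have h₂ := hf.comp_measurable (g := fun q : T × α × α => (q.1, q.2.2)) (by fun_prop)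
      exact (h₁.mul (continuous_conj.comp_stronglyMeasurable h₂)).aestronglyMeasurable
    · simp only [Function.uncurry, F, norm_mul, RCLike.norm_conj]
      exact mul_le_mul (hC _ _) (hC _ _) (norm_nonneg _) ((norm_nonneg _).trans (hC q.1 q.2.1))
  calc ∫ t, ‖∫ y, f t y ∂ν‖ ^ 2 ∂τ = (∫ t, ∫ p, F t p ∂ν.prod ν ∂τ).re := by
        simp_rw [norm_integral_sq_eq_re_integral_prod]
        exact integral_re hF.integral_prod_left
    _ = (∫ p, ∫ t, F t p ∂τ ∂ν.prod ν).re := by rw [integral_integral_swap hF]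
    _ ≤ ‖∫ p, ∫ t, F t p ∂τ ∂ν.prod ν‖ := re_le_norm _
    _ ≤ ∫ p, ‖∫ t, F t p ∂τ‖ ∂ν.prod ν := norm_integral_le_integral_norm _

theorem measureReal_prod_setOf_dist_le {α : Type*} [PseudoMetricSpace α] [MeasurableSpace α]
    [OpensMeasurableSpace α] [SecondCountableTopology α] (ν : Measure α) [IsFiniteMeasure ν]
    (r : ℝ) :
    (ν.prod ν).real {p | dist p.1 p.2 ≤ r} = ∫ y, (ν (Metric.closedBall y r)).toReal ∂ν := by
  have hS : MeasurableSet {p : α × α | dist p.1 p.2 ≤ r} :=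
    (isClosed_le continuous_dist continuous_const).measurableSet
  have hslice : ∀ x, Prod.mk x ⁻¹' {p : α × α | dist p.1 p.2 ≤ r} = Metric.closedBall x r := by
    intro x
    ext y
    simp [dist_comm]
  rw [measureReal_def, Measure.prod_apply hS, ← integral_toReal
    (measurable_measure_prodMk_left hS).aemeasurable (ae_of_all _ fun x => measure_lt_top ν _)]
  simp_rw [hslice]

theorem norm_setIntegral_scaled_exp_mul_conj_le {b r m : ℝ} (hb : 1 < b) (hr : 0 < r) (hm : m ≠ 0)
    (x y : ℝ) :
    ‖∫ t in Ioc (0:ℝ) 1, exp (2 * Real.pi * I * m * ((b ^ t * x : ℝ) : ℂ)) *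
        conj (exp (2 * Real.pi * I * m * ((b ^ t * y : ℝ) : ℂ)))‖ ≤
      1 / (r * |m| * Real.log b) +
        {p : ℝ × ℝ | dist p.1 p.2 ≤ r}.indicator (fun _ => 1) (x, y) := by
  have hphase : ∀ t : ℝ, exp (2 * Real.pi * I * m * ((b ^ t * x : ℝ) : ℂ)) *
      conj (exp (2 * Real.pi * I * m * ((b ^ t * y : ℝ) : ℂ))) =
        exp (↑(2 * Real.pi * m * (x - y) * b ^ t) * I) := fun t => by
    rw [← exp_conj, ← exp_add]
    simp only [map_mul, conj_ofReal, conj_I, map_ofNat]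
    push_cast
    ring_nf
  simp_rw [hphase, ← intervalIntegral.integral_of_le zero_le_one]
  by_cases hxy : dist x y ≤ r
  · rw [indicator_of_mem (by exact hxy)]
    have hC : 0 ≤ 1 / (r * |m| * Real.log b) := by
      have := Real.log_pos hb
      positivity
    calc _ ≤ 1 * |(1:ℝ) - 0| := intervalIntegral.norm_integral_le_of_norm_le_const
          fun t _ => (norm_exp_ofReal_mul_I _).le
      _ ≤ _ := by linarith
  · rw [indicator_of_notMem (by exact hxy), add_zero]
    exact norm_integral_exp_two_pi_mul_rpow_le hb hr hm (Real.dist_eq x y ▸ (not_le.mp hxy).le)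

/-- **Fourier transform of randomly scaled measures.** For a Borel probability measure `ν` on
`ℝ`, `b > 1`, `r > 0` and `m ≠ 0`:
`∫_0^1 |ν̂ scaled by b^t at m|² dt ≤ 1/(r |m| ln b) + ∫ ν(B_r(y)) dν(y)`. -/
theorem scaled_fourier_transform_bound (ν : Measure ℝ) [IsProbabilityMeasure ν]
    (b : ℝ) (hb : 1 < b) (r : ℝ) (hr : 0 < r) (m : ℝ) (hm : m ≠ 0) :
    (∫ t in (0:ℝ)..1,
        ‖∫ y, Complex.exp (2 * Real.pi * Complex.I * m * ((b ^ t * y : ℝ) : ℂ)) ∂ν‖ ^ 2) ≤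
      1 / (r * |m| * Real.log b) + ∫ y, (ν (Metric.closedBall y r)).toReal ∂ν := by
  set f : ℝ → ℝ → ℂ := fun t y => exp (2 * Real.pi * I * m * ((b ^ t * y : ℝ) : ℂ))
  set C := 1 / (r * |m| * Real.log b)
  set S := {p : ℝ × ℝ | dist p.1 p.2 ≤ r}
  have hS : MeasurableSet S := (isClosed_le continuous_dist continuous_const).measurableSet
  have hf : Continuous (Function.uncurry f) := by
    have : Continuous fun q : ℝ × ℝ => b ^ q.1 :=
      continuous_const.rpow continuous_fst fun _ => Or.inl (by linarith)
    unfold f Function.uncurry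
    fun_prop
  have hbound : Integrable (fun p => C + S.indicator (fun _ => (1:ℝ)) p) (ν.prod ν) :=
    (integrable_const C).add ((integrable_const 1).indicator hS)
  calc _ = ∫ t in Ioc (0:ℝ) 1, ‖∫ y, f t y ∂ν‖ ^ 2 := intervalIntegral.integral_of_le zero_le_one
    _ ≤ ∫ p, ‖∫ t in Ioc (0:ℝ) 1, f t p.1 * conj (f t p.2)‖ ∂ν.prod ν :=
      integral_norm_integral_sq_le _ ν hf.stronglyMeasurable (C := 1) fun t y => by
        simp [f, norm_exp]
    _ ≤ ∫ p, C + S.indicator (fun _ => (1:ℝ)) p ∂ν.prod ν :=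
      integral_mono_of_nonneg (ae_of_all _ fun _ => norm_nonneg _) hbound
        (ae_of_all _ fun p => norm_setIntegral_scaled_exp_mul_conj_le hb hr hm p.1 p.2)
    _ = C + ∫ y, (ν (Metric.closedBall y r)).toReal ∂ν := by
      rw [integral_add (integrable_const C) ((integrable_const 1).indicator hS),
        integral_indicator_const _ hS, measureReal_prod_setOf_dist_le]
      simp
end

section
/- Let b > 1, m ≠ 0, and y ≠ y' real numbers. Then |∫_0^1 e^{2πi m b^t (y−y')} dt| ≤ 2/(π |m| ln(b) |y−y'|). -/
/-!
Substituting `z = b ^ t` turns the integral into `∫_1^b e^{iλz} dz / (z log b)` with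
`λ = 2π m (y - y')`. Integrating by parts against the decreasing amplitude `1 / (z log b)` bounds
it by twice the amplitude at `z = 1` divided by `|λ|`, i.e. by `2 / (|λ| log b)`, which is half of
the claimed bound.
-/

open Complex intervalIntegral MeasureTheory Set

theorem norm_integral_mul_exp_mul_I_le {g g' : ℝ → ℂ} {a b lam : ℝ} (hab : a ≤ b) (hlam : lam ≠ 0)
    (hg : ∀ x ∈ Icc a b, HasDerivAt g (g' x) x) (hg' : IntervalIntegrable g' volume a b) :
    ‖∫ x in a..b, g x * cexp (lam * x * I)‖ ≤ (‖g a‖ + ‖g b‖ + ∫ x in a..b, ‖g' x‖) / |lam| := by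
  set e : ℝ → ℂ := fun x => cexp (lam * x * I) / (lam * I)
  have hlamI : (lam * I : ℂ) ≠ 0 := mul_ne_zero (ofReal_ne_zero.mpr hlam) I_ne_zero
  have he : ∀ x : ℝ, HasDerivAt e (cexp (lam * x * I)) x := fun x => by
    have := ((((hasDerivAt_id x).ofReal_comp).const_mul (lam : ℂ)).mul_const I).cexp.div_const
      (lam * I)
    simpa [hlamI] using this
  have he_norm : ∀ x, ‖e x‖ = |lam|⁻¹ := fun x => by simp [e, norm_exp]
  have he' : Continuous fun x : ℝ => cexp (lam * x * I) := by fun_prop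
  rw [integral_mul_deriv_eq_deriv_mul (fun x hx => hg x (uIcc_of_le hab ▸ hx))
    (fun x _ => he x) hg' (he'.intervalIntegrable a b)]
  calc ‖g b * e b - g a * e a - ∫ x in a..b, g' x * e x‖
      ≤ ‖g b * e b‖ + ‖g a * e a‖ + ‖∫ x in a..b, g' x * e x‖ :=
        (norm_sub_le _ _).trans (by gcongr; exact norm_sub_le _ _)
    _ ≤ ‖g b * e b‖ + ‖g a * e a‖ + ∫ x in a..b, ‖g' x * e x‖ := by
      gcongr; exact norm_integral_le_integral_norm hab
    _ = (‖g a‖ + ‖g b‖ + ∫ x in a..b, ‖g' x‖) / |lam| := by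
      simp only [norm_mul, he_norm, intervalIntegral.integral_mul_const]
      ring

theorem norm_integral_smul_exp_mul_I_le_of_deriv_nonpos {g g' : ℝ → ℝ} {a b lam : ℝ} (hab : a ≤ b)
    (hlam : lam ≠ 0) (hg : ∀ x ∈ Icc a b, HasDerivAt g (g' x) x)
    (hg' : IntervalIntegrable g' volume a b) (hg'_nonpos : ∀ x ∈ Icc a b, g' x ≤ 0)
    (hgb : 0 ≤ g b) :
    ‖∫ x in a..b, g x • cexp (lam * x * I)‖ ≤ 2 * g a / |lam| := by
  have hvar : ∫ x in a..b, ‖(g' x : ℂ)‖ = g a - g b := by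
    rw [integral_congr (g := fun x => -g' x) fun x hx => by
      simp [abs_of_nonpos (hg'_nonpos x (uIcc_of_le hab ▸ hx))]]
    rw [intervalIntegral.integral_neg, integral_eq_sub_of_hasDerivAt
      (fun x hx => hg x (uIcc_of_le hab ▸ hx)) hg']
    ring
  have hga : 0 ≤ g a := by
    linarith [integral_nonneg (μ := volume) hab fun x _ => norm_nonneg (g' x : ℂ)]
  simp_rw [real_smul]
  calc _ ≤ (‖(g a : ℂ)‖ + ‖(g b : ℂ)‖ + ∫ x in a..b, ‖(g' x : ℂ)‖) / |lam| :=
        norm_integral_mul_exp_mul_I_le hab hlam (fun x hx => (hg x hx).ofReal_comp)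
          ⟨hg'.1.ofReal, hg'.2.ofReal⟩
    _ = 2 * g a / |lam| := by
      rw [hvar, norm_real, norm_real, Real.norm_of_nonneg hga, Real.norm_of_nonneg hgb]
      ring

theorem integral_comp_rpow {E : Type*} [NormedAddCommGroup E] [NormedSpace ℝ E] [CompleteSpace E]
    {b : ℝ} (hb : 1 < b) (f : ℝ → E) (s t : ℝ) :
    ∫ x in s..t, f (b ^ x) = ∫ z in b ^ s..b ^ t, (z * Real.log b)⁻¹ • f z := by
  have hb0 : 0 < b := by linarith
  have hlog : 0 < Real.log b := Real.log_pos hb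
  rw [← integral_deriv_smul_comp_of_deriv_nonneg (f' := fun x => b ^ x * Real.log b)
    (Real.continuous_const_rpow hb0.ne').continuousOn
    (fun x _ => (Real.hasStrictDerivAt_const_rpow hb0 x).hasDerivAt)
    (fun x _ => by positivity)]
  refine integral_congr fun x _ => ?_
  simp only [Function.comp, smul_smul]
  rw [mul_inv_cancel₀ (by positivity), one_smul]

theorem norm_integral_inv_mul_log_smul_exp_mul_I_le {b lam : ℝ} (hb : 1 < b) (hlam : lam ≠ 0) :
    ‖∫ z in (1 : ℝ)..b, (z * Real.log b)⁻¹ • cexp (lam * z * I)‖ ≤ 2 / (|lam| * Real.log b) := by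
  have hlog : 0 < Real.log b := Real.log_pos hb
  have hderiv : ∀ z ∈ Icc 1 b, HasDerivAt (fun z => (z * Real.log b)⁻¹)
      (-(1 * Real.log b) / (z * Real.log b) ^ 2) z := fun z hz =>
    ((hasDerivAt_id z).mul_const _).inv (by have := hz.1; positivity)
  have hcont : ContinuousOn (fun z => -(1 * Real.log b) / (z * Real.log b) ^ 2) (Icc 1 b) :=
    continuousOn_const.div (by fun_prop) fun z hz => by have := hz.1; positivity
  calc _ ≤ 2 * (1 * Real.log b)⁻¹ / |lam| :=
        norm_integral_smul_exp_mul_I_le_of_deriv_nonpos (g := fun z => (z * Real.log b)⁻¹) hb.le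
          hlam hderiv (hcont.intervalIntegrable_of_Icc hb.le)
          (fun z _ => div_nonpos_of_nonpos_of_nonneg (by linarith) (sq_nonneg _))
          (by positivity)
    _ = 2 / (|lam| * Real.log b) := by field_simp

/-- For `b > 1`, `m ≠ 0` and `y ≠ y'`:
`|∫_0^1 e^{2πi m b^t (y - y')} dt| ≤ 2/(π |m| ln(b) |y - y'|)`. -/
theorem oscillatory_integral_bound (b : ℝ) (hb : 1 < b) (m : ℝ) (hm : m ≠ 0)
    (y y' : ℝ) (hyy : y ≠ y') :
    ‖∫ t in (0:ℝ)..1, Complex.exp (2 * Real.pi * Complex.I * m * ((b ^ t * (y - y') : ℝ) : ℂ))‖ ≤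
      2 / (Real.pi * |m| * Real.log b * |y - y'|) := by
  set lam := 2 * Real.pi * m * (y - y')
  have hlam : lam ≠ 0 := by have := sub_ne_zero.mpr hyy; positivity
  have hphase : ∀ t : ℝ,
      2 * Real.pi * I * m * ((b ^ t * (y - y') : ℝ) : ℂ) = lam * (b ^ t : ℝ) * I := fun t => by
    push_cast [lam]; ring
  simp_rw [hphase]
  rw [integral_comp_rpow hb (fun z => cexp (lam * z * I)), Real.rpow_zero, Real.rpow_one]
  refine (norm_integral_inv_mul_log_smul_exp_mul_I_le hb hlam).trans ?_
  have hpos : 0 < Real.pi * |m| * Real.log b * |y - y'| := by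
    have := sub_ne_zero.mpr hyy; have := Real.log_pos hb; positivity
  have hlam_abs : |lam| * Real.log b = 2 * (Real.pi * |m| * Real.log b * |y - y'|) := by
    simp only [lam, abs_mul, abs_two, abs_of_pos Real.pi_pos]; ring
  rw [hlam_abs]
  exact div_le_div_of_nonneg_left zero_le_two hpos (by linarith)
end

section
/- Let X, Y be compact metric spaces, S : Y → Y continuous with invariant Borel probability measure μ, (x_k) a fixed sequence in X, and n_k → ∞. Suppose that for μ-a.e. y, the sequence of pairs (x_k, S^{n_k} y) equidistributes for a Borel probability measure ν_y on X × Y. Let ν = ∫ ν_y dμ(y) and let τ be the first-marginal of ν. Then ν = τ × μ. -/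
open MeasureTheory Filter ProbabilityTheory Topology

/-!
For continuous `F` on `X × Y` put `G x = ∫ F (x, y) dμ(y)`. Integrating the Cesàro means of
`F (x_k, S^{n_k} y)` over `y`, dominated convergence and the invariance of `μ` show that the
Cesàro means of `G (x_k)` converge to `∫ F dν`. The same argument for `G ∘ Prod.fst`, whose values
along the sequence do not depend on `y`, shows that they also converge to `∫ G dτ = ∫ F d(τ × μ)`.
So `ν` and `τ × μ` integrate every continuous function alike.
-/

noncomputable def cesaroMean (u : ℕ → ℝ) (N : ℕ) : ℝ := (N : ℝ)⁻¹ * ∑ k ∈ Finset.Icc 1 N, u k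

lemma norm_cesaroMean_le {u : ℕ → ℝ} {C : ℝ} (hu : ∀ k, ‖u k‖ ≤ C) (N : ℕ) :
    ‖cesaroMean u N‖ ≤ C := by
  rcases N.eq_zero_or_pos with rfl | hN
  · simpa [cesaroMean] using (norm_nonneg _).trans (hu 0)
  rw [cesaroMean, norm_mul, norm_inv, RCLike.norm_natCast, inv_mul_le_iff₀ (by positivity)]
  calc ‖∑ k ∈ Finset.Icc 1 N, u k‖ ≤ ∑ k ∈ Finset.Icc 1 N, ‖u k‖ := norm_sum_le _ _
    _ ≤ ∑ k ∈ Finset.Icc 1 N, C := Finset.sum_le_sum fun k _ => hu k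
    _ = N * C := by simp

lemma Measurable.cesaroMean {α : Type*} [MeasurableSpace α] {u : ℕ → α → ℝ}
    (hu : ∀ k, Measurable (u k)) (N : ℕ) :
    Measurable fun a => cesaroMean (fun k => u k a) N :=
  (Finset.measurable_sum _ fun k _ => hu k).const_mul _

lemma integral_cesaroMean {α : Type*} [MeasurableSpace α] {μ : Measure α} {u : ℕ → α → ℝ}
    (hu : ∀ k, Integrable (u k) μ) (N : ℕ) :
    ∫ a, cesaroMean (fun k => u k a) N ∂μ = cesaroMean (fun k => ∫ a, u k a ∂μ) N := by
  simp only [cesaroMean]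
  rw [integral_const_mul, integral_finsetSum _ fun k _ => hu k]

theorem MeasureTheory.Measure.integral_bind {α β : Type*} [MeasurableSpace α]
    [MeasurableSpace β] {μ : Measure α} {κ : Kernel α β} {f : β → ℝ}
    (hf : Integrable f (κ ∘ₘ μ)) :
    ∫ b, f b ∂(κ ∘ₘ μ) = ∫ a, ∫ b, f b ∂κ a ∂μ := by
  rw [Measure.comp_eq_comp_const_apply] at hf ⊢
  rw [Kernel.integral_comp hf, Kernel.const_apply]

theorem MeasureTheory.MeasurePreserving.integral_comp_of_aestronglyMeasurable {α β : Type*}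
    [MeasurableSpace α] [MeasurableSpace β] {μ : Measure α} {ν : Measure β} {f : α → β}
    (hf : MeasurePreserving f μ ν) {g : β → ℝ} (hg : AEStronglyMeasurable g ν) :
    ∫ a, g (f a) ∂μ = ∫ b, g b ∂ν := by
  rw [← hf.map_eq] at hg ⊢
  exact (integral_map hf.measurable.aemeasurable hg).symm

theorem tendsto_cesaroMean_integral_of_ae_tendsto {α β : Type*} [MeasurableSpace α]
    [MeasurableSpace β] {μ : Measure α} [IsFiniteMeasure μ] {κ : Kernel α β} [IsFiniteKernel κ]
    {f : β → ℝ} (hf : Measurable f) {C : ℝ} (hfC : ∀ b, ‖f b‖ ≤ C)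
    {p : ℕ → α → β} (hp : ∀ k, Measurable (p k))
    (hlim : ∀ᵐ a ∂μ, Tendsto (cesaroMean fun k => f (p k a)) atTop (𝓝 (∫ b, f b ∂κ a))) :
    Tendsto (cesaroMean fun k => ∫ a, f (p k a) ∂μ) atTop (𝓝 (∫ b, f b ∂(κ ∘ₘ μ))) := by
  have hfp : ∀ k, Integrable (fun a => f (p k a)) μ := fun k =>
    .of_bound (hf.comp (hp k)).aestronglyMeasurable C (ae_of_all _ fun a => hfC _)
  rw [Measure.integral_bind (.of_bound hf.aestronglyMeasurable C (ae_of_all _ hfC))]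
  have hdom := tendsto_integral_of_dominated_convergence (fun _ => C)
    (F := fun N a => cesaroMean (fun k => f (p k a)) N)
    (fun N => (Measurable.cesaroMean (fun k => hf.comp (hp k)) N).aestronglyMeasurable)
    (integrable_const C) (fun N => ae_of_all _ fun a => norm_cesaroMean_le (fun k => hfC _) N) hlim
  simpa only [integral_cesaroMean hfp] using hdom

theorem joining_product_lemma_general {X Y : Type*}
    [MetricSpace X] [CompactSpace X] [MeasurableSpace X] [BorelSpace X]
    [MetricSpace Y] [CompactSpace Y] [MeasurableSpace Y] [BorelSpace Y]
    (S : Y → Y) (μ : Measure Y) [IsProbabilityMeasure μ]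
    (hinv : MeasurePreserving S μ μ)
    (x : ℕ → X) (n : ℕ → ℕ)
    (ν : Y → Measure (X × Y)) (hνmeas : Measurable ν)
    (hνprob : ∀ y, IsProbabilityMeasure (ν y))
    (hequi : ∀ᵐ y ∂μ, ∀ f : C(X × Y, ℝ),
      Tendsto (fun N : ℕ => (N : ℝ)⁻¹ * ∑ k ∈ Finset.Icc 1 N, f (x k, S^[n k] y)) atTop
        (nhds (∫ p, f p ∂(ν y)))) :
    μ.bind ν = ((μ.bind ν).map Prod.fst).prod μ := by
  let κ : Kernel Y (X × Y) := ⟨ν, hνmeas⟩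
  have : IsMarkovKernel κ := ⟨hνprob⟩
  change κ ∘ₘ μ = ((κ ∘ₘ μ).map Prod.fst).prod μ
  refine ext_of_forall_integral_eq_of_IsFiniteMeasure fun F₀ => ?_
  let F : C(X × Y, ℝ) := F₀.toContinuousMap
  let G : C(X, ℝ) := ⟨fun x₀ => ∫ y, F (x₀, y) ∂μ, by
    simpa only [Measure.restrict_univ] using continuous_parametric_integral_of_continuous
      (μ := μ) (f := fun x₀ y => F (x₀, y)) F.continuous isCompact_univ⟩
  let H : C(X × Y, ℝ) := G.comp ⟨Prod.fst, continuous_fst⟩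
  have hp : ∀ k, Measurable fun y => (x k, S^[n k] y) := fun k =>
    measurable_const.prodMk (hinv.measurable.iterate _)
  have hG : ∀ k, ∫ y, F (x k, S^[n k] y) ∂μ = G (x k) := fun k =>
    (hinv.iterate (n k)).integral_comp_of_aestronglyMeasurable (g := fun y => F (x k, y))
      (F.continuous.comp (Continuous.prodMk_right (x k))).aestronglyMeasurable
  have hF : Tendsto (cesaroMean fun k => G (x k)) atTop (𝓝 (∫ p, F p ∂(κ ∘ₘ μ))) := by
    simpa only [hG] using tendsto_cesaroMean_integral_of_ae_tendsto (κ := κ)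
      F.continuous.measurable F.norm_coe_le_norm hp (hequi.mono fun y hy => hy F)
  have hH : Tendsto (cesaroMean fun k => G (x k)) atTop (𝓝 (∫ p, H p ∂(κ ∘ₘ μ))) := by
    simpa [H] using tendsto_cesaroMean_integral_of_ae_tendsto (κ := κ)
      H.continuous.measurable H.norm_coe_le_norm hp (hequi.mono fun y hy => hy H)
  calc ∫ p, F₀ p ∂(κ ∘ₘ μ) = ∫ p, G p.1 ∂(κ ∘ₘ μ) := tendsto_nhds_unique hF hH
    _ = ∫ x₀, G x₀ ∂((κ ∘ₘ μ).map Prod.fst) :=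
      (integral_map measurable_fst.aemeasurable G.continuous.aestronglyMeasurable).symm
    _ = ∫ p, F₀ p ∂(((κ ∘ₘ μ).map Prod.fst).prod μ) := (integral_prod _ (F₀.integrable _)).symm

/-- **Joining lemma.** If `(x_k, S^{n_k} y)` equidistributes for `ν_y` for `μ`-a.e. `y`, then
`ν = ∫ ν_y dμ(y)` is the product of its first marginal with `μ`. -/
theorem joining_product_lemma {X Y : Type*}
    [MetricSpace X] [CompactSpace X] [MeasurableSpace X] [BorelSpace X]
    [MetricSpace Y] [CompactSpace Y] [MeasurableSpace Y] [BorelSpace Y]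
    (S : Y → Y) (hS : Continuous S) (μ : Measure Y) [IsProbabilityMeasure μ]
    (hinv : MeasurePreserving S μ μ)
    (x : ℕ → X) (n : ℕ → ℕ) (hn : Tendsto n atTop atTop)
    (ν : Y → Measure (X × Y)) (hνmeas : Measurable ν)
    (hνprob : ∀ y, IsProbabilityMeasure (ν y))
    (hequi : ∀ᵐ y ∂μ, ∀ f : C(X × Y, ℝ),
      Tendsto (fun N : ℕ => (N : ℝ)⁻¹ * ∑ k ∈ Finset.Icc 1 N, f (x k, S^[n k] y)) atTop
        (nhds (∫ p, f p ∂(ν y)))) :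
    μ.bind ν = ((μ.bind ν).map Prod.fst).prod μ :=
  joining_product_lemma_general S μ hinv x n ν hνmeas hνprob hequi
end

section
/- Let μ be a Borel probability measure on a compact metric space X and T : X → X continuous. Suppose that for every nonzero integer m and every ε > 0 there exists k ∈ ℕ such that μ( x : limsup_{N→∞} |(1/N) ∑_{n=1}^N e^{2πi m T_b^n(T^k x)}| < ε ) > 1 − ε, where μ is T-invariant. Then for μ-a.e. x, limsup_{N→∞} |(1/N) ∑_{n=1}^N e^{2πi m T_b^n x}| = 0 for all m ≠ 0, hence μ-a.e. x equidistributes under T_b for Lebesgue measure on ℝ/ℤ. -/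
/-!
By `T_a`-invariance of `μ`, the hypothesis says that the Weyl limsup `g_m` itself satisfies
`μ {g_m < ε} > 1 - ε` for every `ε > 0`, so `g_m = 0` almost everywhere, simultaneously for the
countably many `m ≠ 0`. The Weyl sums are Birkhoff averages of `fourier m` for `x ↦ b • x`
(evaluated at `b • x`, since they start at `n = 1`). The continuous functions whose Birkhoff
averages converge to the Haar integral form a closed set, because the averages are 1-Lipschitz in
the function; it contains the trigonometric polynomials, which are dense.
-/

open MeasureTheory Filter Topology AddCircle

section BirkhoffAverage

variable {α M : Type*}

theorem birkhoffAverage_smul_apply_smul {G R : Type*} [Monoid G] [MulAction G α]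
    [DivisionSemiring R] [AddCommMonoid M] [Module R M] (b : G) (g : α → M) (n : ℕ) (x : α) :
    birkhoffAverage R (b • ·) g n (b • x) = (n : R)⁻¹ • ∑ k ∈ Finset.Icc 1 n, g (b ^ k • x) := by
  rw [birkhoffAverage, birkhoffSum, ← Finset.Ico_add_one_right_eq_Icc,
    Finset.sum_Ico_eq_sum_range, Nat.add_sub_cancel]
  simp only [smul_iterate_apply, smul_smul, ← pow_succ, add_comm 1]

theorem birkhoffAverage_smul {R : Type*} [DivisionSemiring R] [AddCommMonoid M] [Module R M]
    {S : Type*} [Monoid S] [DistribMulAction S M] [SMulCommClass R S M]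
    (f : α → α) (c : S) (g : α → M) :
    birkhoffAverage R f (c • g) = c • birkhoffAverage R f g := by
  funext n x
  simp only [birkhoffAverage, birkhoffSum, Pi.smul_apply, Finset.smul_sum]
  exact Finset.sum_congr rfl fun k _ => smul_comm _ c _

theorem continuous_birkhoffAverage {α M R : Type*} [TopologicalSpace α] [DivisionSemiring R]
    [AddCommMonoid M] [Module R M] [TopologicalSpace M] [ContinuousAdd M] [ContinuousConstSMul R M]
    {f : α → α} {g : α → M} (hf : Continuous f) (hg : Continuous g) (n : ℕ) :
    Continuous (birkhoffAverage R f g n) :=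
  (continuous_finsetSum _ fun k _ => hg.comp (hf.iterate k)).const_smul _

variable {X E : Type*} [TopologicalSpace X] [CompactSpace X] [NormedAddCommGroup E]
  (𝕜 : Type*) [RCLike 𝕜] [NormedSpace 𝕜 E]

theorem norm_birkhoffAverage_le (f : X → X) (g : C(X, E)) (n : ℕ) (x : X) :
    ‖birkhoffAverage 𝕜 f g n x‖ ≤ ‖g‖ := by
  rcases n.eq_zero_or_pos with rfl | hn
  · simp
  calc ‖birkhoffAverage 𝕜 f g n x‖ ≤ (n : ℝ)⁻¹ * (n * ‖g‖) := by
        rw [birkhoffAverage, norm_smul, norm_inv, RCLike.norm_natCast]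
        gcongr
        simpa [birkhoffSum] using
          norm_sum_le_of_le (Finset.range n) fun k _ => g.norm_coe_le_norm (f^[k] x)
    _ = ‖g‖ := by field_simp

theorem lipschitzWith_birkhoffAverage (f : X → X) (n : ℕ) (x : X) :
    LipschitzWith 1 fun g : C(X, E) => birkhoffAverage 𝕜 f g n x := by
  refine LipschitzWith.of_dist_le_mul fun g h => ?_
  simpa [dist_eq_norm, birkhoffAverage_sub] using norm_birkhoffAverage_le 𝕜 f (g - h) n x

end BirkhoffAverage

namespace ContinuousMap

variable {X E : Type*} [TopologicalSpace X] [CompactSpace X] [MeasurableSpace X]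
  [OpensMeasurableSpace X] [NormedAddCommGroup E] (μ : Measure X)

theorem integrable [IsFiniteMeasure μ] (f : C(X, E)) : Integrable f μ :=
  .of_bound f.continuous.aestronglyMeasurable_of_compactSpace ‖f‖ (ae_of_all _ f.norm_coe_le_norm)

theorem lipschitzWith_integral [NormedSpace ℝ E] [IsProbabilityMeasure μ] :
    LipschitzWith 1 fun f : C(X, E) => ∫ x, f x ∂μ := by
  refine LipschitzWith.of_dist_le_mul fun f g => ?_
  rw [NNReal.coe_one, one_mul, dist_eq_norm, dist_eq_norm, ← integral_sub (f.integrable μ)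
    (g.integrable μ)]
  simpa using norm_integral_le_of_norm_le_const (μ := μ) (ae_of_all _ (f - g).norm_coe_le_norm)

end ContinuousMap

section Weyl

variable {T : ℝ} [Fact (0 < T)]

theorem integral_fourier_haarAddCircle (m : ℤ) :
    ∫ y : AddCircle T, fourier m y ∂haarAddCircle = if m = 0 then (1 : ℂ) else 0 := by
  simpa [fourierCoeff, Pi.single_apply, eq_comm] using congr_fun (fourierCoeff_fourier (T := T) m) 0

theorem tendsto_birkhoffAverage_integral_of_tendsto_fourier (φ : AddCircle T → AddCircle T)
    (x : AddCircle T)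
    (h : ∀ m : ℤ, m ≠ 0 → Tendsto (birkhoffAverage ℂ φ (fourier m) · x) atTop (𝓝 0))
    (f : C(AddCircle T, ℂ)) :
    Tendsto (birkhoffAverage ℂ φ f · x) atTop (𝓝 (∫ y, f y ∂haarAddCircle)) := by
  set S := {g : C(AddCircle T, ℂ) |
    Tendsto (birkhoffAverage ℂ φ g · x) atTop (𝓝 (∫ y, g y ∂haarAddCircle))}
  have hS : IsClosed S :=
    (LipschitzWith.uniformEquicontinuous _ 1 fun n =>
      lipschitzWith_birkhoffAverage ℂ φ n x).equicontinuous.isClosed_setOfPred_tendsto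
        (ContinuousMap.lipschitzWith_integral _).continuous
  have hspan : (Submodule.span ℂ (Set.range (fourier (T := T))) : Set C(AddCircle T, ℂ)) ⊆ S := by
    intro g hg
    induction hg using Submodule.span_induction with
    | mem _ hg =>
      obtain ⟨m, rfl⟩ := hg
      rw [Set.mem_ofPred_eq, integral_fourier_haarAddCircle]
      split_ifs with hm
      · subst hm
        refine tendsto_const_nhds.congr' ((eventually_ne_atTop 0).mono fun n hn => ?_)
        have hinv : (fourier 0 : AddCircle T → ℂ) ∘ φ = fourier 0 := by ext; simp
        simp [birkhoffAverage_of_comp_eq ℂ hinv (Nat.cast_ne_zero.2 hn)]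
      · exact h m hm
    | zero => simp [S, birkhoffAverage, birkhoffSum]
    | add g g' _ _ hg hg' =>
      simpa [S, birkhoffAverage_add, integral_add (g.integrable _) (g'.integrable _)]
        using hg.add hg'
    | smul c g _ hg =>
      simpa [S, birkhoffAverage_smul, integral_const_mul] using hg.const_smul c
  refine hS.closure_subset_iff.2 hspan ?_
  rw [← Submodule.topologicalClosure_coe, span_fourier_closure_eq_top]
  trivial

theorem tendsto_birkhoffAverage_integral_of_tendsto_fourier_real (φ : AddCircle T → AddCircle T)
    (x : AddCircle T)
    (h : ∀ m : ℤ, m ≠ 0 → Tendsto (birkhoffAverage ℂ φ (fourier m) · x) atTop (𝓝 0))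
    (f : C(AddCircle T, ℝ)) :
    Tendsto (birkhoffAverage ℝ φ f · x) atTop (𝓝 (∫ y, f y ∂haarAddCircle)) := by
  rw [← tendsto_ofReal_iff, ← integral_complex_ofReal]
  convert tendsto_birkhoffAverage_integral_of_tendsto_fourier φ x h
    ((⟨Complex.ofReal, Complex.continuous_ofReal⟩ : C(ℝ, ℂ)).comp f) using 2 with n
  · exact map_birkhoffAverage ℝ ℂ Complex.ofRealHom φ f n x
  · rfl

end Weyl

section Recurrence

variable {α : Type*} [MeasurableSpace α] {μ : Measure α} [IsProbabilityMeasure μ] {g : α → ℝ}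

theorem ae_nonpos_of_forall_ofReal_one_sub_lt_measure (hg : Measurable g)
    (h : ∀ ε > 0, ENNReal.ofReal (1 - ε) < μ {x | g x < ε}) : ∀ᵐ x ∂μ, g x ≤ 0 := by
  have hlt : ∀ δ > 0, ∀ᵐ x ∂μ, g x < δ := by
    intro δ hδ
    rw [ae_iff_measure_eq (measurableSet_lt hg measurable_const).nullMeasurableSet, measure_univ]
    refine le_antisymm prob_le_one (le_of_tendsto (x := 𝓝[>] (0 : ℝ))
      (f := fun ε => ENNReal.ofReal (1 - ε)) ?_ ?_)
    · have hcont : Continuous fun ε : ℝ => ENNReal.ofReal (1 - ε) :=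
        ENNReal.continuous_ofReal.comp (by fun_prop)
      simpa using (hcont.tendsto 0).mono_left nhdsWithin_le_nhds
    · filter_upwards [Ioo_mem_nhdsGT hδ] with ε hε
      exact (h ε hε.1).le.trans (measure_mono fun x hx => hx.trans hε.2)
  filter_upwards [ae_all_iff.2 fun j : ℕ => hlt (1 / (j + 1)) (by positivity)] with x hx
  exact ge_of_tendsto' tendsto_one_div_add_atTop_nhds_zero_nat fun j => (hx j).le

theorem ae_nonpos_of_forall_exists_iterate {T : α → α} (hT : MeasurePreserving T μ μ)
    (hg : Measurable g) (h : ∀ ε > 0, ∃ k, ENNReal.ofReal (1 - ε) < μ {x | g (T^[k] x) < ε}) :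
    ∀ᵐ x ∂μ, g x ≤ 0 := by
  refine ae_nonpos_of_forall_ofReal_one_sub_lt_measure hg fun ε hε => ?_
  obtain ⟨k, hk⟩ := h ε hε
  rwa [← (hT.iterate k).measure_preimage (measurableSet_lt hg measurable_const).nullMeasurableSet]

end Recurrence

theorem tendsto_zero_of_limsup_norm_nonpos {ι E : Type*} [SeminormedAddCommGroup E] {l : Filter ι}
    [l.NeBot] {u : ι → E} (hu : IsBoundedUnder (· ≤ ·) l (‖u ·‖))
    (h : limsup (‖u ·‖) l ≤ 0) : Tendsto u l (𝓝 0) :=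
  tendsto_zero_iff_norm_tendsto_zero.2 <| tendsto_of_le_liminf_of_limsup_le
    (le_liminf_of_le hu.isCoboundedUnder_ge (.of_forall fun _ => norm_nonneg _)) h hu
    (isBoundedUnder_of ⟨0, fun _ => norm_nonneg _⟩)

theorem weyl_reduction_general (a b : ℕ)
    (μ : Measure UnitAddCircle) [IsProbabilityMeasure μ]
    (hinv : MeasurePreserving (fun x : UnitAddCircle => a • x) μ μ)
    (H : ∀ m : ℤ, m ≠ 0 → ∀ ε > (0:ℝ), ∃ k : ℕ,
      μ {x : UnitAddCircle |
          limsup (fun N : ℕ => ‖(N : ℂ)⁻¹ * ∑ n ∈ Finset.Icc 1 N,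
            fourier m ((b ^ n) • ((a ^ k) • x))‖) atTop < ε}
        > ENNReal.ofReal (1 - ε)) :
    ∀ᵐ x ∂μ,
      (∀ m : ℤ, m ≠ 0 →
        limsup (fun N : ℕ => ‖(N : ℂ)⁻¹ * ∑ n ∈ Finset.Icc 1 N,
          fourier m ((b ^ n) • x)‖) atTop = 0) ∧
      ∀ f : C(UnitAddCircle, ℝ),
        Tendsto (fun N : ℕ => (N : ℝ)⁻¹ * ∑ n ∈ Finset.Icc 1 N, f ((b ^ n) • x)) atTop
          (nhds (∫ y, f y ∂(volume : Measure UnitAddCircle))) := by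
  set W : ℤ → UnitAddCircle → ℕ → ℂ := fun m x N =>
    birkhoffAverage ℂ (b • ·) (fourier m) N (b • x)
  have hsum (m : ℤ) (x : UnitAddCircle) (N : ℕ) :
      (N : ℂ)⁻¹ * ∑ n ∈ Finset.Icc 1 N, fourier m (b ^ n • x) = W m x N :=
    ((birkhoffAverage_smul_apply_smul b (fourier m) N x).trans (smul_eq_mul _ _)).symm
  simp only [hsum] at H ⊢
  have hbdd (m : ℤ) (x : UnitAddCircle) : IsBoundedUnder (· ≤ ·) atTop (‖W m x ·‖) :=
    isBoundedUnder_of ⟨1, fun N =>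
      (norm_birkhoffAverage_le ℂ _ (fourier m) N _).trans (fourier_norm m).le⟩
  have hmeas (m : ℤ) : Measurable fun x => limsup (‖W m x ·‖) atTop :=
    .limsup fun N => ((continuous_birkhoffAverage (continuous_const_smul b)
      (fourier m).continuous N).comp (continuous_const_smul b)).norm.measurable
  have hae : ∀ᵐ x ∂μ, ∀ m : ℤ, m ≠ 0 → limsup (‖W m x ·‖) atTop ≤ 0 := by
    refine ae_all_iff.2 fun m => ?_
    rcases eq_or_ne m 0 with rfl | hm
    · exact ae_of_all _ fun _ h => absurd rfl h
    · filter_upwards [ae_nonpos_of_forall_exists_iterate hinv (hmeas m) fun ε hε => by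
        simpa [smul_iterate_apply] using H m hm ε hε] with x hx _ using hx
  filter_upwards [hae] with x hx
  have hW0 (m : ℤ) (hm : m ≠ 0) : Tendsto (W m x) atTop (𝓝 0) :=
    tendsto_zero_of_limsup_norm_nonpos (hbdd m x) (hx m hm)
  refine ⟨fun m hm => by simpa using (hW0 m hm).norm.limsup_eq, fun f => ?_⟩
  simpa [birkhoffAverage_smul_apply_smul, integral_haarAddCircle] using
    tendsto_birkhoffAverage_integral_of_tendsto_fourier_real (b • ·) (b • x) hW0 f

/-- **Reduction of Host's theorem via Weyl's criterion.** Let `μ` be `T_a`-invariant on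
`ℝ/ℤ`. If for every nonzero `m` and every `ε > 0` there is `k` with
`μ(x : limsup_N |(1/N) ∑_{n=1}^N e(m T_b^n T_a^k x)| < ε) > 1 - ε`, then for `μ`-a.e. `x` the
Weyl sums vanish for all `m ≠ 0`, hence `x` equidistributes under `T_b` for Lebesgue. -/
theorem weyl_reduction (a b : ℕ) (ha : 2 ≤ a) (hb : 2 ≤ b)
    (μ : Measure UnitAddCircle) [IsProbabilityMeasure μ]
    (hinv : MeasurePreserving (fun x : UnitAddCircle => a • x) μ μ)
    (H : ∀ m : ℤ, m ≠ 0 → ∀ ε > (0:ℝ), ∃ k : ℕ,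
      μ {x : UnitAddCircle |
          limsup (fun N : ℕ => ‖(N : ℂ)⁻¹ * ∑ n ∈ Finset.Icc 1 N,
            fourier m ((b ^ n) • ((a ^ k) • x))‖) atTop < ε}
        > ENNReal.ofReal (1 - ε)) :
    ∀ᵐ x ∂μ,
      (∀ m : ℤ, m ≠ 0 →
        limsup (fun N : ℕ => ‖(N : ℂ)⁻¹ * ∑ n ∈ Finset.Icc 1 N,
          fourier m ((b ^ n) • x)‖) atTop = 0) ∧
      ∀ f : C(UnitAddCircle, ℝ),
        Tendsto (fun N : ℕ => (N : ℝ)⁻¹ * ∑ n ∈ Finset.Icc 1 N, f ((b ^ n) • x)) atTop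
          (nhds (∫ y, f y ∂(volume : Measure UnitAddCircle))) :=
  weyl_reduction_general a b μ hinv H
end
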